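/- arXiv:1910.02326 — 2 statements merged into one kernel-verified Lean document; each statement's English description precedes it below -/
import Mathlib

section
/- Squared denominator in a product of reduced fractions (computational content of Lemma 4.5 and Lemma 4.6): Let B ⊆ ℕ^N∖{0} be a finite set of pairwise non-proportional vectors, each having gcd of its coordinates equal to 1 (as is the case for the positive roots of a reduced root system written in simple-root coordinates). Let T₁, T₂ ⊆ B with T₁ ∩ T₂ ≠ ∅, and let f, g be nonzero polynomials in ℤ[x₁,…,x_N] with b_d ∤ f for all d ∈ T₁ and b_d ∤ g for all d ∈ T₂. Then there exist no subset T ⊆ B and polynomial h ∈ ℤ[x₁,…,x_N] with f·g·∏_{d∈T} b_d = h·∏_{d∈T₁} b_d · ∏_{d∈T₂} b_d. (Hence the product of two reduced fractions whose denominator-root sets meet cannot be rewritten with a squarefree denominator ∏_{β∈T}(1−e^{−β}), which is why ch(V(μ))·ch(V(λ)) is not the character of a module in category O when T_{V(μ)} ∩ T_{V(λ)} ≠ ∅.) -/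
/-!
Choose `c` with `∑ cᵢ dᵢ = 1` (Bézout, as `d` is primitive). The exponent map
`a ↦ a - (∑ cⱼ aⱼ) • d` induces a ring map from `R[x₁,…,x_N]` to the group ring `R[ℤ^N]`,
which is a domain; two monomials with the same image differ by a multiple of `d` in the exponent,
so the kernel is exactly `(1 - X^d)` and `b_d` is prime. The same map shows that `b_d ∣ b_{d'}`
forces `d'` to be a multiple of `d`, hence `d' = d` when both are primitive. Thus for
`d₀ ∈ T₁ ∩ T₂` the prime `b_{d₀}` divides the right-hand side twice but the left-hand side at
most once.
-/

open MvPolynomial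

/-- The binomial `b_d = 1 - X^d` in `ℤ[x₁,…,x_N]`. -/
noncomputable def bd {N : ℕ} (d : Fin N → ℕ) : MvPolynomial (Fin N) ℤ :=
  1 - ∏ i, X i ^ d i

theorem Finset.natCast_gcd {ι : Type*} (s : Finset ι) (d : ι → ℕ) :
    ((s.gcd d : ℕ) : ℤ) = s.gcd fun i => (d i : ℤ) := by
  classical
  induction s using Finset.induction with
  | empty => simp
  | insert a s ha ih =>
    rw [Finset.gcd_insert, Finset.gcd_insert, ← ih, ← Int.coe_gcd, Int.gcd_natCast_natCast]
    rfl

theorem Finset.exists_sum_mul_eq_one_of_gcd_eq_one {ι : Type*} {s : Finset ι} {d : ι → ℕ}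
    (hd : s.gcd d = 1) : ∃ c : ι → ℤ, ∑ i ∈ s, c i * d i = 1 := by
  obtain ⟨c, hc⟩ := s.gcd_eq_sum_mul fun i => (d i : ℤ)
  refine ⟨c, ?_⟩
  rw [← Finset.natCast_gcd, hd, Nat.cast_one] at hc
  simpa only [mul_comm] using hc.symm

theorem Prime.not_mul_self_dvd_mul_prod {α ι : Type*} [CommMonoidWithZero α] [IsCancelMulZero α]
    {p a : α} {s : Finset ι} {b : ι → α} {i : ι} (hp : Prime p) (ha : ¬ p ∣ a)
    (hb : ∀ j ∈ s, j ≠ i → ¬ p ∣ b j) (hi : b i = p) : ¬ p * p ∣ a * ∏ j ∈ s, b j := by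
  classical
  intro h
  have hs : ∏ j ∈ s, b j ∣ p * ∏ j ∈ s.erase i, b j := by
    rw [← hi, ← Finset.prod_insert (Finset.notMem_erase i s)]
    exact Finset.prod_dvd_prod_of_subset _ _ _ (Finset.insert_erase_subset i s)
  have h' : p * p ∣ p * (a * ∏ j ∈ s.erase i, b j) :=
    h.trans (by rw [mul_left_comm]; exact mul_dvd_mul_left a hs)
  rcases hp.dvd_mul.mp ((mul_dvd_mul_iff_left hp.ne_zero).mp h') with hpa | hpb
  · exact ha hpa
  · obtain ⟨j, hj, hpj⟩ := (hp.dvd_finsetProd_iff _).mp hpb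
    exact hb j (Finset.mem_of_mem_erase hj) (Finset.ne_of_mem_erase hj) hpj

namespace MvPolynomial

variable {ι R : Type*} [CommRing R]

theorem one_sub_monomial_dvd_monomial_add_nsmul_sub (d a : ι →₀ ℕ) (n : ℕ) :
    (1 - monomial d (1 : R)) ∣ monomial (a + n • d) 1 - monomial a 1 := by
  have h : monomial (a + n • d) (1 : R) - monomial a 1 =
      -(monomial a 1 * (1 - monomial d 1 ^ n)) := by
    rw [monomial_pow, one_pow, mul_sub, mul_one, monomial_mul, one_mul, neg_sub]
  rw [h, dvd_neg]
  simpa only [one_pow] using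
    (sub_dvd_pow_sub_pow (1 : MvPolynomial ι R) (monomial d 1) n).mul_left _

theorem one_sub_monomial_dvd_monomial_sub_monomial {d a a' : ι →₀ ℕ} {k : ℤ}
    (h : ∀ i, (a i : ℤ) = a' i + k * d i) :
    (1 - monomial d (1 : R)) ∣ monomial a 1 - monomial a' 1 := by
  obtain ⟨n, rfl | rfl⟩ := Int.eq_nat_or_neg k
  · obtain rfl : a = a' + n • d := by
      ext i; have := h i; simp only [Finsupp.add_apply, Finsupp.smul_apply, smul_eq_mul]; zify
      linarith
    exact one_sub_monomial_dvd_monomial_add_nsmul_sub d a' n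
  · obtain rfl : a' = a + n • d := by
      ext i; have := h i; simp only [Finsupp.add_apply, Finsupp.smul_apply, smul_eq_mul]; zify
      linarith
    rw [dvd_sub_comm]
    exact one_sub_monomial_dvd_monomial_add_nsmul_sub d a n

theorem dvd_sub_mapDomain {p : MvPolynomial ι R} {h : (ι →₀ ℕ) → (ι →₀ ℕ)}
    (hp : ∀ m, p ∣ monomial m 1 - monomial (h m) 1) (f : MvPolynomial ι R) :
    p ∣ f - AddMonoidAlgebra.mapDomain h f := by
  induction f using MvPolynomial.induction_on' with
  | monomial m r =>
    rw [← single_eq_monomial, AddMonoidAlgebra.mapDomain_single, single_eq_monomial,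
      single_eq_monomial]
    simpa only [mul_sub, C_mul_monomial, mul_one] using (hp m).mul_left (C r)
  | add f g hf hg =>
    rw [AddMonoidAlgebra.mapDomain_add, add_sub_add_comm]
    exact dvd_add hf hg

theorem dvd_of_mapDomain_eq_zero {G : Type*} {g : (ι →₀ ℕ) → G} {p : MvPolynomial ι R}
    (hp : ∀ a a', g a = g a' → p ∣ monomial a 1 - monomial a' 1) {f : MvPolynomial ι R}
    (hf : AddMonoidAlgebra.mapDomain g f = 0) : p ∣ f := by
  -- `invFun g ∘ g` moves every exponent to a chosen representative of its fibre under `g`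
  have hr : ∀ m, g m = g (Function.invFun g (g m)) := fun m =>
    (Function.invFun_eq ⟨m, rfl⟩).symm
  have hrf : AddMonoidAlgebra.mapDomain (Function.invFun g ∘ g) f = 0 := by
    have : AddMonoidAlgebra.mapDomain (Function.invFun g ∘ g) f =
        AddMonoidAlgebra.mapDomain (Function.invFun g) (AddMonoidAlgebra.mapDomain g f) := by
      simp [AddMonoidAlgebra.mapDomain, Finsupp.mapDomain_comp]
    rw [this, hf, AddMonoidAlgebra.mapDomain_zero]
  simpa only [hrf, sub_zero] using
    dvd_sub_mapDomain (h := Function.invFun g ∘ g) (fun m => hp _ _ (hr m)) f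

section ProjAlong

variable [Fintype ι]

@[simps]
def projAlong (c : ι → ℤ) (d : ι →₀ ℕ) : (ι →₀ ℕ) →+ (ι → ℤ) where
  toFun a i := a i - (∑ j, c j * a j) * d i
  map_zero' := by ext; simp
  map_add' a b := by
    ext i
    simp only [Finsupp.add_apply, Nat.cast_add, mul_add, Finset.sum_add_distrib, Pi.add_apply]
    ring

variable {c : ι → ℤ} {d : ι →₀ ℕ}

theorem projAlong_self (hcd : ∑ i, c i * d i = 1) : projAlong c d d = 0 := by
  ext i; simp [hcd]

theorem eq_add_mul_of_projAlong_eq {a a' : ι →₀ ℕ} (h : projAlong c d a = projAlong c d a')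
    (i : ι) :
    (a i : ℤ) = a' i + (∑ j, c j * a j - ∑ j, c j * a' j) * d i := by
  have := congrFun h i
  simp only [projAlong_apply] at this
  linarith

theorem ker_mapDomainRingHom_projAlong (hcd : ∑ i, c i * d i = 1) :
    RingHom.ker (AddMonoidAlgebra.mapDomainRingHom R (projAlong c d) :
      MvPolynomial ι R →+* AddMonoidAlgebra R (ι → ℤ)) = Ideal.span {1 - monomial d 1} := by
  ext f
  rw [RingHom.mem_ker, Ideal.mem_span_singleton]
  constructor
  · exact dvd_of_mapDomain_eq_zero fun a a' h =>
      one_sub_monomial_dvd_monomial_sub_monomial (eq_add_mul_of_projAlong_eq h)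
  · rintro ⟨q, rfl⟩
    rw [map_mul, map_sub, map_one, AddMonoidAlgebra.mapDomainRingHom_apply, ← single_eq_monomial,
      AddMonoidAlgebra.mapDomain_single, projAlong_self hcd, ← AddMonoidAlgebra.one_def, sub_self,
      zero_mul]

theorem prime_one_sub_monomial [IsDomain R] (hcd : ∑ i, c i * d i = 1) :
    Prime (1 - monomial d (1 : R)) := by
  have hd : d ≠ 0 := by rintro rfl; simp at hcd
  have hne : 1 - monomial d (1 : R) ≠ 0 := by
    rw [sub_ne_zero, ne_comm, MvPolynomial.one_def, Ne, monomial_left_inj one_ne_zero]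
    exact hd
  rw [← Ideal.span_singleton_prime hne, ← ker_mapDomainRingHom_projAlong hcd]
  exact RingHom.ker_isPrime _

theorem exists_eq_nsmul_of_one_sub_monomial_dvd [Nontrivial R] (hcd : ∑ i, c i * d i = 1)
    {d' : ι →₀ ℕ} (h : (1 - monomial d (1 : R)) ∣ 1 - monomial d' 1) : ∃ k : ℕ, d' = k • d := by
  rw [← Ideal.mem_span_singleton, ← ker_mapDomainRingHom_projAlong hcd, RingHom.mem_ker, map_sub,
    map_one, sub_eq_zero, AddMonoidAlgebra.mapDomainRingHom_apply, ← single_eq_monomial,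
    AddMonoidAlgebra.mapDomain_single, AddMonoidAlgebra.one_def,
    AddMonoidAlgebra.single_left_inj one_ne_zero, ← map_zero (projAlong c d)] at h
  refine ⟨(∑ j, c j * d' j).natAbs, Finsupp.ext fun i => ?_⟩
  simpa [Int.natAbs_mul] using congrArg Int.natAbs (eq_add_mul_of_projAlong_eq h.symm i)

end ProjAlong

end MvPolynomial

section Binomial

variable {N : ℕ}

theorem bd_eq_one_sub_monomial (d : Fin N → ℕ) :
    bd d = 1 - monomial (Finsupp.equivFunOnFinite.symm d) 1 := by
  rw [bd, monomial_eq, C_1, one_mul, Finsupp.prod_fintype _ _ fun i => pow_zero _]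
  rfl

theorem prime_bd {d : Fin N → ℕ} (hd : Finset.univ.gcd d = 1) : Prime (bd d) := by
  obtain ⟨c, hc⟩ := Finset.exists_sum_mul_eq_one_of_gcd_eq_one hd
  rw [bd_eq_one_sub_monomial]
  exact prime_one_sub_monomial hc

theorem eq_of_bd_dvd_bd {d d' : Fin N → ℕ} (hd : Finset.univ.gcd d = 1)
    (hd' : Finset.univ.gcd d' = 1) (h : bd d ∣ bd d') : d' = d := by
  obtain ⟨c, hc⟩ := Finset.exists_sum_mul_eq_one_of_gcd_eq_one hd
  rw [bd_eq_one_sub_monomial, bd_eq_one_sub_monomial] at h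
  obtain ⟨k, hk⟩ := exists_eq_nsmul_of_one_sub_monomial_dvd hc h
  replace hk : d' = fun i => k * d i := funext fun i => by simpa using DFunLike.congr_fun hk i
  have hgcd : Finset.univ.gcd d' = k * Finset.univ.gcd d := by
    rw [hk, Finset.gcd_mul_left, normalize_eq]
  rw [hd, hd', mul_one] at hgcd
  simp [hk, ← hgcd]

end Binomial

theorem squared_denominator_in_product_of_reduced_fractions_general
    {N : ℕ} (B : Finset (Fin N → ℕ))
    (hgcd : ∀ d ∈ B, Finset.univ.gcd d = 1)
    (T₁ T₂ : Finset (Fin N → ℕ)) (hT₁ : T₁ ⊆ B)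
    (hmeet : (T₁ ∩ T₂).Nonempty)
    (f g : MvPolynomial (Fin N) ℤ)
    (hfd : ∀ d ∈ T₁, ¬ bd d ∣ f) (hgd : ∀ d ∈ T₂, ¬ bd d ∣ g) :
    ¬ ∃ (T : Finset (Fin N → ℕ)) (h : MvPolynomial (Fin N) ℤ),
        T ⊆ B ∧
        f * g * ∏ d ∈ T, bd d = h * (∏ d ∈ T₁, bd d) * ∏ d ∈ T₂, bd d := by
  rintro ⟨T, h, hTB, heq⟩
  obtain ⟨d₀, hd₀T⟩ := hmeet
  obtain ⟨hd₀T₁, hd₀T₂⟩ := Finset.mem_inter.mp hd₀T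
  have hd₀ := hgcd _ (hT₁ hd₀T₁)
  have hP := prime_bd hd₀
  refine hP.not_mul_self_dvd_mul_prod (a := f * g) (s := T) (i := d₀) ?_ ?_ rfl ?_
  · exact fun hfg => (hP.dvd_mul.mp hfg).elim (hfd _ hd₀T₁) (hgd _ hd₀T₂)
  · exact fun e he hne hdvd => hne (eq_of_bd_dvd_bd hd₀ (hgcd e (hTB he)) hdvd)
  · rw [heq]
    exact mul_dvd_mul ((Finset.dvd_prod_of_mem bd hd₀T₁).mul_left h)
      (Finset.dvd_prod_of_mem bd hd₀T₂)

/-- computational content of Lemmas 4.5 and 4.6: a product of two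
reduced fractions whose denominator-root sets meet cannot be rewritten with a
squarefree denominator `∏_{d ∈ T} b_d`. -/
theorem squared_denominator_in_product_of_reduced_fractions
    {N : ℕ} (B : Finset (Fin N → ℕ))
    (h0 : ∀ d ∈ B, d ≠ 0)
    (hgcd : ∀ d ∈ B, Finset.univ.gcd d = 1)
    (hprop : ∀ d ∈ B, ∀ d' ∈ B, d ≠ d' →
      ∀ q : ℚ, (fun i => (d' i : ℚ)) ≠ fun i => q * (d i : ℚ))
    (T₁ T₂ : Finset (Fin N → ℕ)) (hT₁ : T₁ ⊆ B) (hT₂ : T₂ ⊆ B)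
    (hmeet : (T₁ ∩ T₂).Nonempty)
    (f g : MvPolynomial (Fin N) ℤ) (hf : f ≠ 0) (hg : g ≠ 0)
    (hfd : ∀ d ∈ T₁, ¬ bd d ∣ f) (hgd : ∀ d ∈ T₂, ¬ bd d ∣ g) :
    ¬ ∃ (T : Finset (Fin N → ℕ)) (h : MvPolynomial (Fin N) ℤ),
        T ⊆ B ∧
        f * g * ∏ d ∈ T, bd d = h * (∏ d ∈ T₁, bd d) * ∏ d ∈ T₂, bd d :=
  squared_denominator_in_product_of_reduced_fractions_general B hgcd T₁ T₂ hT₁ hmeet f g hfd hgd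
end

section
/- Squarefreeness of root binomials (supporting claim for the reduced-form arguments of Lemmas 3.7, 3.8 and 4.5): for every nonzero d ∈ ℕ^N, the polynomial b_d = 1 − X^d is squarefree in ℤ[x₁,…,x_N], i.e. it is not divisible by p² for any non-unit p. -/
open MvPolynomial

/-- for every nonzero `d ∈ ℕ^N`, the binomial `b_d = 1 - X^d` is
squarefree in `ℤ[x₁,…,x_N]`, i.e. not divisible by `p²` for any non-unit `p`. -/
theorem root_binomial_squarefree
    {N : ℕ} (d : Fin N → ℕ) (hd : d ≠ 0) :
    Squarefree (bd d) := by
  classical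
  set D : Fin N →₀ ℕ := Finsupp.equivFunOnFinite.symm d with hDdef
  have hDa : ∀ i, D i = d i := fun i => rfl
  have hM : (∏ i, X i ^ d i : MvPolynomial (Fin N) ℤ) = monomial D 1 := by
    rw [← prod_X_pow_eq_monomial]
    refine (Finset.prod_subset (Finset.subset_univ D.support) ?_).symm
    intro x _ hx
    rw [Finsupp.notMem_support_iff] at hx
    rw [hDa] at hx
    rw [hx, pow_zero]
  have hfdef : bd d = 1 - monomial D 1 := by rw [bd, hM]
  obtain ⟨i0, hi0⟩ : ∃ i, d i ≠ 0 := Function.ne_iff.mp hd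
  have hD0 : D ≠ 0 := by
    intro h
    exact hi0 (by rw [← hDa, h, Finsupp.coe_zero, Pi.zero_apply])
  have hcoeff0 : coeff 0 (bd d) = 1 := by
    rw [hfdef]
    simp [coeff_monomial, hD0]
  have hfne : bd d ≠ 0 := by
    intro h; rw [h] at hcoeff0; simp at hcoeff0
  rw [squarefree_iff_irreducible_sq_not_dvd_of_ne_zero hfne]
  intro p hpirr hpd
  have hp : Prime p := UniqueFactorizationMonoid.irreducible_iff_prime.mp hpirr
  have hpf : p ∣ bd d := (dvd_mul_right p p).trans hpd
  -- p divides the partial derivative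
  have hder : p ∣ pderiv i0 (bd d) := by
    obtain ⟨g, hg⟩ := hpd
    rw [hg, pderiv_mul, pderiv_mul]
    exact dvd_add (dvd_mul_of_dvd_left (dvd_add (dvd_mul_left p _) (dvd_mul_right p _)) g)
      (dvd_mul_of_dvd_left (dvd_mul_right p p) _)
  have hderval : pderiv i0 (bd d) = - monomial (D - Finsupp.single i0 1) ((D i0 : ℤ)) := by
    rw [hfdef, map_sub, pderiv_one, pderiv_monomial, zero_sub, one_mul]
  -- hence p divides C (d i0) * X^D
  have hsum : (D - Finsupp.single i0 1) + Finsupp.single i0 1 = D :=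
    tsub_add_cancel_of_le (Finsupp.single_le_iff.mpr
      (Nat.one_le_iff_ne_zero.mpr (by rw [hDa]; exact hi0)))
  have hmono : p ∣ C (d i0 : ℤ) * (monomial D 1 : MvPolynomial (Fin N) ℤ) := by
    have h1 : p ∣ monomial (D - Finsupp.single i0 1) ((D i0 : ℤ)) := by
      have h := hder
      rw [hderval] at h
      exact (dvd_neg).mp h
    have h2 : p ∣ monomial (D - Finsupp.single i0 1) ((D i0 : ℤ)) * X i0 :=
      dvd_mul_of_dvd_left h1 _
    have h3 : monomial (D - Finsupp.single i0 1) ((D i0 : ℤ)) * X i0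
        = C (d i0 : ℤ) * monomial D 1 := by
      rw [X, monomial_mul, hsum, C_mul_monomial, mul_one, mul_one, hDa]
    rwa [h3] at h2
  -- deduce p ∣ C (d i0)
  have hpc : p ∣ C (d i0 : ℤ) := by
    have h4 : C (d i0 : ℤ) * (monomial D 1 : MvPolynomial (Fin N) ℤ)
        = C (d i0 : ℤ) - C (d i0 : ℤ) * bd d := by
      rw [hfdef]; ring
    have h5 : p ∣ C (d i0 : ℤ) - C (d i0 : ℤ) * bd d := h4 ▸ hmono
    have h6 : p ∣ C (d i0 : ℤ) * bd d := dvd_mul_of_dvd_right hpf _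
    have h7 := dvd_add h5 h6
    rwa [sub_add_cancel] at h7
  -- factor the constant into primes
  have hc0 : (d i0 : ℤ) ≠ 0 := Int.natCast_ne_zero.mpr hi0
  obtain ⟨m, hmprime, hmprod⟩ := UniqueFactorizationMonoid.exists_prime_factors (d i0 : ℤ) hc0
  have hpm : p ∣ (m.map (C : ℤ →+* MvPolynomial (Fin N) ℤ)).prod := by
    rw [← map_multiset_prod]
    exact hpc.trans (map_dvd C hmprod.symm.dvd)
  obtain ⟨a, ha, hpa⟩ := hp.exists_mem_multiset_dvd hpm
  obtain ⟨q, hq, rfl⟩ := Multiset.mem_map.mp ha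
  have hCq : Prime (C q : MvPolynomial (Fin N) ℤ) := (prime_C_iff (Fin N)).mpr (hmprime q hq)
  have hassoc := hp.associated_of_dvd hCq hpa
  have hCqf : (C q : MvPolynomial (Fin N) ℤ) ∣ bd d := hassoc.symm.dvd.trans hpf
  have hq1 : q ∣ coeff 0 (bd d) := (C_dvd_iff_dvd_coeff q _).mp hCqf 0
  rw [hcoeff0] at hq1
  exact (hmprime q hq).not_unit (isUnit_of_dvd_one hq1)
end
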